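/- If Θ†_U(φ1,φ2) = 0, then inf_U (φ1+φ2) ≤ Λ†_U(φ1,φ2) (i.e. the pair (φ1,φ2) is quasiuniformly lower semicontinuous on U), and moreover Θ†_{U'}(φ1,φ2) = 0 for every subset U' ⊂ U. -/

import Mathlib

/-!
`Θ†_U(φ1,φ2) = 0` says: for `V ∈ EI(U)` and `ε > 0`, any two sufficiently close points
`x1, x2 ∈ V` of the domains admit `x ∈ U` with `d(x, x1) < ε` and
`φ1 x + φ2 x < φ1 x1 + φ2 x2 + ε`. The second inequality gives `inf_U (φ1 + φ2) ≤ Λ†_U`.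
If `V ∈ EI(U')` with margin `ρ` and `ε ≤ ρ`, the first one puts `x` in `U'`, so the same
witness shows `(φ1 ♦ φ2)_{U'}(x1, x2) < ε`, i.e. `Θ†_{U'} = 0`.
-/

open Metric Set Filter

noncomputable section

/-- `V` is an essentially interior subset of `U`. -/
def EssInt {X : Type*} [MetricSpace X] (U V : Set X) : Prop :=
  ∃ ρ > (0 : ℝ), ∀ v ∈ V, Metric.ball v ρ ⊆ U

/-- The uniform infimum `Λ°_W(φ1,φ2)` of the decoupled sum over `W`. -/
def lambdaCirc {X : Type*} [MetricSpace X] (φ1 φ2 : X → EReal) (W : Set X) : EReal :=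
  ⨆ η : {η : ℝ // 0 < η},
    sInf {v : EReal | ∃ x1 ∈ W, ∃ x2 ∈ W, dist x1 x2 < η.1 ∧ v = φ1 x1 + φ2 x2}

/-- The quasiuniform infimum `Λ†_U(φ1,φ2)`. -/
def lambdaDag {X : Type*} [MetricSpace X] (φ1 φ2 : X → EReal) (U : Set X) : EReal :=
  ⨅ V : {V : Set X // EssInt U V}, lambdaCirc φ1 φ2 V.1

/-- `inf_U (φ1 + φ2)`. -/
def infSum {X : Type*} [MetricSpace X] (φ1 φ2 : X → EReal) (U : Set X) : EReal :=
  sInf {v : EReal | ∃ x ∈ U, v = φ1 x + φ2 x}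

/-- `(φ1 ♦ φ2)_W (x1, x2)`. -/
def diamond {X : Type*} [MetricSpace X] (φ1 φ2 : X → EReal) (W : Set X) (x1 x2 : X) : EReal :=
  sInf {v : EReal | ∃ x ∈ W,
    v = max (max ((dist x x1 : ℝ) : EReal) ((dist x x2 : ℝ) : EReal))
        (φ1 x + φ2 x - φ1 x1 - φ2 x2)}

/-- `Θ°_U(φ1,φ2)` (with the convention `sup ∅ = 0`). -/
def thetaCirc {X : Type*} [MetricSpace X] (φ1 φ2 : X → EReal) (U : Set X) : EReal :=
  ⨅ η : {η : ℝ // 0 < η},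
    sSup (insert (0 : EReal)
      {v : EReal | ∃ x1 x2 : X, φ1 x1 < ⊤ ∧ x1 ∈ U ∧ φ2 x2 < ⊤ ∧ x2 ∈ U ∧
        dist x1 x2 < η.1 ∧ v = diamond φ1 φ2 U x1 x2})

/-- `Θ†_{U,W}(φ1,φ2)`: as `Θ†_U`, but with the `♦`-expression taken over `W`. -/
def thetaDagW {X : Type*} [MetricSpace X] (φ1 φ2 : X → EReal) (U W : Set X) : EReal :=
  ⨆ V : {V : Set X // EssInt U V}, ⨅ η : {η : ℝ // 0 < η},
    sSup (insert (0 : EReal)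
      {v : EReal | ∃ x1 x2 : X, φ1 x1 < ⊤ ∧ x1 ∈ V.1 ∧ φ2 x2 < ⊤ ∧ x2 ∈ V.1 ∧
        dist x1 x2 < η.1 ∧ v = diamond φ1 φ2 W x1 x2})

/-- `Θ†_U(φ1,φ2)` (with the convention `sup ∅ = 0`). -/
def thetaDag {X : Type*} [MetricSpace X] (φ1 φ2 : X → EReal) (U : Set X) : EReal :=
  thetaDagW φ1 φ2 U U

/-- Indicator function of a set, in the `ℝ ∪ {+∞}` sense. -/
def indFn {X : Type*} (Ω : Set X) : X → EReal := fun x =>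
  haveI := Classical.propDecidable (x ∈ Ω)
  if x ∈ Ω then 0 else ⊤

/-- `Λ_U(φ1,φ2)`: the uniform infimum of `(φ1,φ2)` around `U`. -/
def lambdaFull {X : Type*} [MetricSpace X] (φ1 φ2 : X → EReal) (U : Set X) : EReal :=
  ⨆ η : {η : ℝ // 0 < η}, ⨆ ε : {ε : ℝ // 0 < ε},
    sInf {v : EReal | ∃ x1 x2 : X,
      dist x1 x2 < η.1 ∧ Metric.infDist x1 U < ε.1 ∧ v = φ1 x1 + φ2 x2}

lemma EReal.le_of_forall_pos_le_add {a b : EReal} (h : ∀ ε : ℝ, 0 < ε → a ≤ b + ε) : a ≤ b := by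
  refine EReal.le_of_forall_lt_iff_le.mp fun z hbz => ?_
  obtain ⟨w, hbw, hwz⟩ := EReal.exists_between_coe_real hbz
  have hwz : w < z := EReal.coe_lt_coe_iff.mp hwz
  calc a ≤ b + ((z - w : ℝ) : EReal) := h _ (_root_.sub_pos.mpr hwz)
    _ ≤ w + ((z - w : ℝ) : EReal) := by gcongr
    _ = z := by rw [← EReal.coe_add, add_sub_cancel]

section

variable {X : Type*} [MetricSpace X]

lemma EssInt.mono {U U' V : Set X} (h : EssInt U V) (hU : U ⊆ U') : EssInt U' V :=
  let ⟨ρ, hρ, hball⟩ := h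
  ⟨ρ, hρ, fun v hv => (hball v hv).trans hU⟩

variable (φ1 φ2 : X → EReal)

lemma thetaDagW_nonneg (U W : Set X) : 0 ≤ thetaDagW φ1 φ2 U W :=
  le_iSup_of_le (⟨∅, 1, one_pos, by simp⟩ : {V : Set X // EssInt U V}) <|
    le_iInf fun _ => le_sSup (mem_insert _ _)

lemma infSum_le {W : Set X} {x : X} (hx : x ∈ W) : infSum φ1 φ2 W ≤ φ1 x + φ2 x :=
  sInf_le ⟨x, hx, rfl⟩

lemma diamond_le {W : Set X} {x x1 x2 : X} (hx : x ∈ W) :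
    diamond φ1 φ2 W x1 x2 ≤ max (max ((dist x x1 : ℝ) : EReal) ((dist x x2 : ℝ) : EReal))
      (φ1 x + φ2 x - φ1 x1 - φ2 x2) :=
  sInf_le ⟨x, hx, rfl⟩

lemma exists_pos_forall_diamond_lt {U W V : Set X} (h : thetaDagW φ1 φ2 U W ≤ 0)
    (hV : EssInt U V) {ε : ℝ} (hε : 0 < ε) :
    ∃ η > (0 : ℝ), ∀ x1 ∈ V, ∀ x2 ∈ V, φ1 x1 < ⊤ → φ2 x2 < ⊤ →
      dist x1 x2 < η → diamond φ1 φ2 W x1 x2 < ε := by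
  have hlt : ⨅ η : {η : ℝ // 0 < η}, sSup (insert (0 : EReal)
      {v : EReal | ∃ x1 x2 : X, φ1 x1 < ⊤ ∧ x1 ∈ V ∧ φ2 x2 < ⊤ ∧ x2 ∈ V ∧
        dist x1 x2 < η.1 ∧ v = diamond φ1 φ2 W x1 x2}) < ε :=
    ((le_iSup_of_le ⟨V, hV⟩ le_rfl).trans h).trans_lt (EReal.coe_pos.mpr hε)
  obtain ⟨⟨η, hη⟩, hsup⟩ := iInf_lt_iff.mp hlt
  exact ⟨η, hη, fun x1 hx1 x2 hx2 h1 h2 hd =>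
    lt_of_le_of_lt (le_sSup <| .inr ⟨x1, x2, h1, hx1, h2, hx2, hd, rfl⟩) hsup⟩

lemma infSum_lt_add_of_diamond_lt {W : Set X} {x1 x2 : X} {ε : EReal}
    (h1 : φ1 x1 ≠ ⊥) (h1' : φ1 x1 ≠ ⊤) (h2 : φ2 x2 ≠ ⊥) (h2' : φ2 x2 ≠ ⊤)
    (h : diamond φ1 φ2 W x1 x2 < ε) : infSum φ1 φ2 W < φ1 x1 + φ2 x2 + ε := by
  rw [diamond, sInf_lt_iff] at h
  obtain ⟨-, ⟨x, hxW, rfl⟩, hx⟩ := h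
  have hgap : φ1 x + φ2 x - φ1 x1 - φ2 x2 < ε := (le_max_right _ _).trans_lt hx
  rw [EReal.sub_lt_iff (.inl h2) (.inl h2'), EReal.sub_lt_iff (.inl h1) (.inl h1')] at hgap
  calc infSum φ1 φ2 W ≤ φ1 x + φ2 x := infSum_le φ1 φ2 hxW
    _ < ε + φ2 x2 + φ1 x1 := hgap
    _ = φ1 x1 + φ2 x2 + ε := by ac_rfl

lemma diamond_lt_of_ball_subset {W W' : Set X} {x1 x2 : X} {ε : ℝ}
    (hball : ball x1 ε ⊆ W') (h : diamond φ1 φ2 W x1 x2 < ε) : diamond φ1 φ2 W' x1 x2 < ε := by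
  rw [diamond, sInf_lt_iff] at h
  obtain ⟨-, ⟨x, -, rfl⟩, hx⟩ := h
  have hdist : dist x x1 < ε :=
    EReal.coe_lt_coe_iff.mp (((le_max_left _ _).trans (le_max_left _ _)).trans_lt hx)
  exact (diamond_le φ1 φ2 (hball (mem_ball.mpr hdist))).trans_lt hx

lemma infSum_le_lambdaDag {U W : Set X} (hbot1 : ∀ x, φ1 x ≠ ⊥) (hbot2 : ∀ x, φ2 x ≠ ⊥)
    (h : thetaDagW φ1 φ2 U W ≤ 0) : infSum φ1 φ2 W ≤ lambdaDag φ1 φ2 U := by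
  refine le_iInf fun ⟨V, hV⟩ => EReal.le_of_forall_pos_le_add fun ε hε => ?_
  rw [← EReal.sub_le_iff_le_add (.inl (EReal.coe_ne_bot ε)) (.inl (EReal.coe_ne_top ε))]
  obtain ⟨η, hη, hdiam⟩ := exists_pos_forall_diamond_lt φ1 φ2 h hV hε
  refine le_iSup_of_le ⟨η, hη⟩ (le_sInf ?_)
  rintro - ⟨x1, hx1, x2, hx2, hd, rfl⟩
  rcases eq_or_ne (φ1 x1) ⊤ with h1 | h1
  · simp [h1, EReal.top_add_of_ne_bot (hbot2 x2)]
  rcases eq_or_ne (φ2 x2) ⊤ with h2 | h2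
  · simp [h2, EReal.add_top_of_ne_bot (hbot1 x1)]
  exact EReal.sub_le_of_le_add (infSum_lt_add_of_diamond_lt φ1 φ2 (hbot1 x1) h1 (hbot2 x2) h2
    (hdiam x1 hx1 x2 hx2 h1.lt_top h2.lt_top hd)).le

lemma thetaDag_eq_zero_of_subset {U U' W : Set X} (h : thetaDagW φ1 φ2 U W ≤ 0) (hU : U' ⊆ U) :
    thetaDag φ1 φ2 U' = 0 := by
  refine le_antisymm (iSup_le fun ⟨V, ρ, hρ, hball⟩ => ?_) (thetaDagW_nonneg φ1 φ2 U' U')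
  refine EReal.le_of_forall_pos_le_add fun ε hε => ?_
  rw [zero_add]
  obtain ⟨η, hη, hdiam⟩ :=
    exists_pos_forall_diamond_lt φ1 φ2 h (EssInt.mono ⟨ρ, hρ, hball⟩ hU) (lt_min hε hρ)
  refine iInf_le_of_le ⟨η, hη⟩ (sSup_le ?_)
  rintro - (rfl | ⟨x1, x2, h1, hx1, h2, hx2, hd, rfl⟩)
  · exact EReal.coe_nonneg.mpr hε.le
  · have hsmall := diamond_lt_of_ball_subset φ1 φ2
      ((ball_subset_ball (min_le_right _ _)).trans (hball x1 hx1)) (hdiam x1 hx1 x2 hx2 h1 h2 hd)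
    exact hsmall.le.trans (EReal.coe_le_coe_iff.mpr (min_le_left _ _))

end

theorem stmt7_general {X : Type*} [MetricSpace X] (φ1 φ2 : X → EReal)
    (hbot1 : ∀ x, φ1 x ≠ ⊥) (hbot2 : ∀ x, φ2 x ≠ ⊥) (U : Set X)
    (h : thetaDag φ1 φ2 U = 0) :
    infSum φ1 φ2 U ≤ lambdaDag φ1 φ2 U ∧
      ∀ U' : Set X, U' ⊆ U → thetaDag φ1 φ2 U' = 0 :=
  ⟨infSum_le_lambdaDag φ1 φ2 hbot1 hbot2 h.le,
    fun _ hU' => thetaDag_eq_zero_of_subset φ1 φ2 h.le hU'⟩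

/-- If `Θ†_U(φ1,φ2) = 0`, then `(φ1,φ2)` is quasiuniformly lower semicontinuous on `U`
and `Θ†_{U'}(φ1,φ2) = 0` for every `U' ⊆ U`. -/
theorem stmt7 {X : Type*} [MetricSpace X] (φ1 φ2 : X → EReal)
    (hbot1 : ∀ x, φ1 x ≠ ⊥) (hbot2 : ∀ x, φ2 x ≠ ⊥) (U : Set X)
    (hne : ∃ x ∈ U, φ1 x < ⊤ ∧ φ2 x < ⊤)
    (h : thetaDag φ1 φ2 U = 0) :
    infSum φ1 φ2 U ≤ lambdaDag φ1 φ2 U ∧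
      ∀ U' : Set X, U' ⊆ U → thetaDag φ1 φ2 U' = 0 :=
  stmt7_general φ1 φ2 hbot1 hbot2 U h
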